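/- arXiv:math/9605203 — 6 statements merged into one kernel-verified Lean document; each statement's English description precedes it below -/
import Mathlib

section
/- In an abelian maximal abelian subgroup setting: an abelian subgroup A of a CSA group G is malnormal in G if and only if A is a maximal abelian subgroup of G. -/
/-- A subgroup `H` of a group `G` is malnormal if `H ∩ gHg⁻¹ = 1` for all `g ∉ H`. -/
def Malnormal {G : Type*} [Group G] (H : Subgroup G) : Prop :=
  ∀ x : G, x ∉ H → ∀ g ∈ H, x⁻¹ * g * x ∈ H → g = 1

/-- A subgroup is maximal abelian if it is abelian and not properly contained in
any abelian subgroup. -/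
def MaximalAbelian {G : Type*} [Group G] (M : Subgroup G) : Prop :=
  IsMulCommutative M ∧ ∀ N : Subgroup G, IsMulCommutative N → M ≤ N → N = M

/-- A group is CSA if all its maximal abelian subgroups are malnormal. -/
def IsCSA (G : Type*) [Group G] : Prop :=
  ∀ M : Subgroup G, MaximalAbelian M → Malnormal M

namespace Malnormal

variable {G : Type*} [Group G] {H : Subgroup G}

theorem centralizer_le (hH : Malnormal H) (hbot : H ≠ ⊥) : Subgroup.centralizer H ≤ H := by
  intro x hx
  by_contra hxH
  obtain ⟨g, hgH, hg⟩ := H.bot_or_exists_ne_one.resolve_left hbot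
  have hconj : x⁻¹ * g * x = g := by
    rw [mul_assoc, Subgroup.mem_centralizer_iff.mp hx g hgH, inv_mul_cancel_left]
  exact hg (hH x hxH g hgH (by rwa [hconj]))

theorem maximalAbelian (hH : Malnormal H) (hbot : H ≠ ⊥) (hcomm : IsMulCommutative H) :
    MaximalAbelian H := by
  refine ⟨hcomm, fun N hN hHN => le_antisymm ?_ hHN⟩
  calc N ≤ Subgroup.centralizer N := Subgroup.le_centralizer N
    _ ≤ Subgroup.centralizer H := Subgroup.centralizer_le hHN
    _ ≤ H := hH.centralizer_le hbot

end Malnormal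

/-- A nontrivial abelian subgroup of a CSA group is malnormal if and only if it
is maximal abelian. -/
theorem malnormal_iff_maximalAbelian {G : Type*} [Group G] (hG : IsCSA G)
    (A : Subgroup G) (hA : IsMulCommutative A) (hbot : A ≠ ⊥) :
    Malnormal A ↔ MaximalAbelian A :=
  ⟨fun hmal => hmal.maximalAbelian hbot hA, hG A⟩
end

section
/- The factors of a free product are malnormal: if P = G * H is a free product, then G is a malnormal subgroup of P. -/
theorem Malnormal.comap_of_injective {P Q : Type*} [Group P] [Group Q] {L : Subgroup Q}
    (hL : Malnormal L) {f : P →* Q} (hf : Function.Injective f) : Malnormal (L.comap f) := by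
  intro x hx g hg hconj
  refine hf ?_
  rw [map_one]
  refine hL (f x) hx (f g) hg ?_
  simpa only [Subgroup.mem_comap, map_mul, map_inv] using hconj

namespace Monoid.CoprodI

variable {ι : Type*} {G : ι → Type*} [∀ i, Group (G i)]

section Reduced

variable [DecidableEq ι] [∀ i, DecidableEq (G i)]

namespace Word

theorem equiv_mul (x y : CoprodI G) : equiv (x * y) = x • equiv y := by
  simp only [equiv, Equiv.coe_fn_mk, mul_smul]

theorem equiv_prod (w : Word G) : equiv w.prod = w :=
  equiv.apply_symm_apply w

theorem fstIdx_of_smul {i : ι} {m : G i} (hm : m ≠ 1) {w : Word G} (hw : w.fstIdx ≠ some i) :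
    (of m • w).fstIdx = some i := by
  rw [← cons_eq_smul (h1 := hw) (h2 := hm), fstIdx_cons]

theorem equiv_of_eq_empty_or_fstIdx {i : ι} (m : G i) :
    equiv (of m) = empty ∨ (equiv (of m)).fstIdx = some i := by
  rcases eq_or_ne m 1 with rfl | hm
  · exact .inl (by rw [map_one]; rfl)
  · exact .inr (fstIdx_of_smul hm (w := empty) (by simp [fstIdx, empty]))

theorem equiv_prod_mul_of_eq_empty_or_fstIdx {i : ι} (b : G i) {w : Word G} (hw : w ≠ empty) :
    equiv (w.prod * of b) = empty ∨ (equiv (w.prod * of b)).fstIdx = w.fstIdx := by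
  induction w using consRecOn with
  | empty => exact absurd rfl hw
  | cons k m w h1 h2 ih =>
    rw [prod_cons, mul_assoc, equiv_mul, fstIdx_cons]
    by_cases hlast : w = empty ∧ k = i
    · obtain ⟨rfl, rfl⟩ := hlast
      rw [prod_empty, one_mul, ← equiv_mul, ← map_mul]
      exact equiv_of_eq_empty_or_fstIdx _
    refine .inr (fstIdx_of_smul h2 ?_)
    rcases eq_or_ne w empty with rfl | hw'
    · have hki : k ≠ i := fun hki => hlast ⟨rfl, hki⟩
      rw [prod_empty, one_mul]
      rcases equiv_of_eq_empty_or_fstIdx b with h | h <;> rw [h]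
      · simp [fstIdx, empty]
      · exact fun hik => hki (Option.some_injective _ hik).symm
    · rcases ih hw' with h | h
      · simp [h, fstIdx, empty]
      · rwa [h]

end Word

theorem eq_one_of_of_mul_prod_eq_prod_mul_of {i : ι} {a b : G i} {t : Word G}
    (ht : t.fstIdx ≠ some i) (ht_ne : t ≠ Word.empty) (h : of a * t.prod = t.prod * of b) :
    a = 1 := by
  by_contra ha
  have hfst : (Word.equiv (t.prod * of b)).fstIdx = some i := by
    rw [← h, Word.equiv_mul, Word.equiv_prod]
    exact Word.fstIdx_of_smul ha ht
  rcases Word.equiv_prod_mul_of_eq_empty_or_fstIdx b ht_ne with h' | h'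
  · simp [h', Word.fstIdx, Word.empty] at hfst
  · exact ht (h' ▸ hfst)

theorem exists_eq_of_mul_prod_of_fstIdx_ne (i : ι) (x : CoprodI G) :
    ∃ (h : G i) (t : Word G), t.fstIdx ≠ some i ∧ x = of h * t.prod := by
  set p := Word.equivPair i (Word.equiv x)
  refine ⟨p.head, p.tail, p.fstIdx_ne, ?_⟩
  rw [← Word.prod_rcons, ← Word.equivPair_symm, Equiv.symm_apply_apply]
  exact (Word.equiv.symm_apply_apply x).symm

end Reduced

theorem malnormal_range_of (i : ι) : Malnormal (of : G i →* CoprodI G).range := by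
  classical
  rintro x hx _ ⟨a, rfl⟩ ⟨b, hb⟩
  obtain ⟨h, t, ht, rfl⟩ := exists_eq_of_mul_prod_of_fstIdx_ne i x
  have ht_ne : t ≠ Word.empty := by
    rintro rfl
    exact hx ⟨h, by rw [Word.prod_empty, mul_one]⟩
  have hconj : of (h⁻¹ * a * h) * t.prod = t.prod * of b := by
    rw [hb]
    simp only [map_mul, map_inv]
    group
  have hconj_one := eq_one_of_of_mul_prod_eq_prod_mul_of ht ht_ne hconj
  rw [mul_assoc, inv_mul_eq_one, right_eq_mul] at hconj_one
  rw [hconj_one, map_one]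

end Monoid.CoprodI

namespace Monoid.Coprod

universe u v

variable (G : Type u) (H : Type v) [Group G] [Group H]

-- `CoprodI` needs all factors in one universe, hence the `ULift`s.
def boolFamily : Bool → Type (max u v) := fun b => cond b (ULift.{v} G) (ULift.{u} H)

instance : ∀ b, Group (boolFamily G H b)
  | true => inferInstanceAs (Group (ULift G))
  | false => inferInstanceAs (Group (ULift H))

def toCoprodI : Coprod G H →* CoprodI (boolFamily G H) :=
  lift ((CoprodI.of (i := true)).comp MulEquiv.ulift.symm.toMonoidHom)
    ((CoprodI.of (i := false)).comp MulEquiv.ulift.symm.toMonoidHom)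

def ofCoprodI : CoprodI (boolFamily G H) →* Coprod G H :=
  CoprodI.lift fun b => Bool.rec (motive := fun b => boolFamily G H b →* Coprod G H)
    (inr.comp MulEquiv.ulift.toMonoidHom) (inl.comp MulEquiv.ulift.toMonoidHom) b

theorem ofCoprodI_of_true (u : boolFamily G H true) :
    ofCoprodI G H (CoprodI.of u) = inl u.down :=
  CoprodI.lift_of _ u

theorem leftInverse_ofCoprodI_toCoprodI :
    Function.LeftInverse (ofCoprodI G H) (toCoprodI G H) :=
  DFunLike.congr_fun (show (ofCoprodI G H).comp (toCoprodI G H) = .id _ by ext <;> rfl)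

theorem range_inl_eq_comap_toCoprodI :
    (inl : G →* Coprod G H).range = (CoprodI.of (i := true)).range.comap (toCoprodI G H) := by
  ext x
  constructor
  · rintro ⟨g, rfl⟩
    exact ⟨ULift.up g, rfl⟩
  · rintro ⟨u, hu⟩
    rw [← leftInverse_ofCoprodI_toCoprodI G H x, ← hu, ofCoprodI_of_true]
    exact ⟨u.down, rfl⟩

end Monoid.Coprod

/-- The factors of a free product are malnormal: the canonical image of `G` in
the free product `G ∗ H` is a malnormal subgroup. -/
theorem coprod_inl_malnormal (G H : Type*) [Group G] [Group H] :
    Malnormal (Monoid.Coprod.inl : G →* Monoid.Coprod G H).range := by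
  rw [Monoid.Coprod.range_inl_eq_comap_toCoprodI]
  exact (Monoid.CoprodI.malnormal_range_of true).comap_of_injective
    (Monoid.Coprod.leftInverse_ofCoprodI_toCoprodI G H).injective
end

section
/- Let T be a nonabelian semidirect product A ⋊ ⟨t⟩ of the additive group A of a finitely generated subring of ℚ by an infinite cyclic group ⟨t⟩. Then every epimorphism ψ from T onto a torsion-free group W that is nontrivial on A and on ⟨t⟩ is an isomorphism. -/
/-!
A subgroup of `ℚ` is torsion-free of rank one: any two elements, the second nonzero, satisfy
`m • a = n • l` with `m ≠ 0`. Hence a homomorphism from it to a torsion-free group that kills a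
nonzero element is trivial, which makes `ψ` injective on `A` and on `⟨t⟩`. If `ψ (a t^k) = 1`,
then `ψ a = ψ (t^k)⁻¹` commutes with `ψ t`, so `ψ (t a t⁻¹) = ψ a` and hence `t a t⁻¹ = a`. An
automorphism of a rank-one group fixing a nonzero element is the identity, and `t` acts
nontrivially because `T` is nonabelian; so `a = 0`, and then `k = 0`.
-/
open Function Multiplicative SemidirectProduct

theorem Rat.exists_zsmul_eq_zsmul (a : ℚ) {l : ℚ} (hl : l ≠ 0) :
    ∃ m n : ℤ, m ≠ 0 ∧ m • a = n • l := by
  refine ⟨l.num * a.den, a.num * l.den, by simp [hl, a.den_ne_zero], ?_⟩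
  simp only [zsmul_eq_mul]
  push_cast
  rw [mul_assoc, mul_assoc, Rat.den_mul_eq_num, Rat.den_mul_eq_num, mul_comm]

section RationalGroup

variable {A : Type*} [AddCommGroup A] {ι : A →+ ℚ}

theorem exists_zpow_eq_zpow_of_injective_rat (hι : Injective ι) (a : Multiplicative A)
    {l : Multiplicative A} (hl : l ≠ 1) : ∃ m n : ℤ, m ≠ 0 ∧ a ^ m = l ^ n := by
  have hl' : ι l.toAdd ≠ 0 := by simpa [map_eq_zero_iff ι hι] using hl
  obtain ⟨m, n, hm, h⟩ := Rat.exists_zsmul_eq_zsmul (ι a.toAdd) hl'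
  exact ⟨m, n, hm, toAdd.injective (hι (by simpa using h))⟩

theorem map_eq_one_of_map_eq_one_of_ne_one (hι : Injective ι) {W : Type*} [Group W]
    (hW : ∀ g : W, g ≠ 1 → ¬IsOfFinOrder g) (f : Multiplicative A →* W)
    {l : Multiplicative A} (hl : l ≠ 1) (hfl : f l = 1) (a : Multiplicative A) : f a = 1 := by
  obtain ⟨m, n, hm, h⟩ := exists_zpow_eq_zpow_of_injective_rat hι a hl
  by_contra ha
  refine hW _ ha (isOfFinOrder_iff_zpow_eq_one.2 ⟨m, hm, ?_⟩)
  rw [← map_zpow, h, map_zpow, hfl, one_zpow]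

theorem injective_of_exists_map_ne_one (hι : Injective ι) {W : Type*} [Group W]
    (hW : ∀ g : W, g ≠ 1 → ¬IsOfFinOrder g) (f : Multiplicative A →* W)
    (hf : ∃ a, f a ≠ 1) : Injective f := by
  refine (injective_iff_map_eq_one f).2 fun l hfl => ?_
  by_contra hl
  obtain ⟨a, ha⟩ := hf
  exact ha (map_eq_one_of_map_eq_one_of_ne_one hι hW f hl hfl a)

theorem eq_one_of_apply_eq_self (hι : Injective ι) (σ : MulAut (Multiplicative A))
    {l : Multiplicative A} (hl : l ≠ 1) (hσl : σ l = l) : σ = 1 := by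
  have : IsAddTorsionFree A := hι.isAddTorsionFree ι
  refine MulEquiv.ext fun a => ?_
  have := map_eq_one_of_map_eq_one_of_ne_one hι (fun _ => not_isOfFinOrder_of_isMulTorsionFree)
    (σ.toMonoidHom / MonoidHom.id _) hl (by simp [hσl]) a
  simpa [div_eq_one] using this

end RationalGroup

namespace SemidirectProduct

theorem mul_comm_of_eq_one {N G : Type*} [CommGroup N] [CommGroup G] {φ : G →* MulAut N}
    (hφ : φ = 1) (u v : N ⋊[φ] G) : u * v = v * u := by
  subst hφ
  exact mulEquivProd.injective (Prod.ext (mul_comm _ _) (mul_comm _ _))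

variable {N G : Type*} [Group N] [CommGroup G] {φ : G →* MulAut N}

theorem map_inl_aut_left_of_map_eq_one {H : Type*} [Group H] (ψ : N ⋊[φ] G →* H)
    {x : N ⋊[φ] G} (hx : ψ x = 1) (g : G) : ψ (inl (φ g x.left)) = ψ (inl x.left) := by
  have hl : ψ (inl x.left) = ψ (inr x.right⁻¹) := by
    rw [map_inv, map_inv, eq_inv_iff_mul_eq_one, ← map_mul, inl_left_mul_inr_right, hx]
  calc ψ (inl (φ g x.left)) = ψ (inr g) * ψ (inl x.left) * ψ (inr g⁻¹) := by
        rw [inl_aut, map_mul, map_mul]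
    _ = ψ (inr (g * x.right⁻¹ * g⁻¹)) := by rw [hl, map_mul, map_mul, map_mul, map_mul]
    _ = ψ (inl x.left) := by rw [mul_inv_cancel_comm, hl]

theorem injective_of_injective_comp_inl_inr {H : Type*} [Group H] (ψ : N ⋊[φ] G →* H)
    (hl : Injective (ψ.comp inl)) (hr : Injective (ψ.comp inr))
    (g : G) (hfix : ∀ n, φ g n = n → n = 1) : Injective ψ := by
  refine (injective_iff_map_eq_one ψ).2 fun x hx => ?_
  have hleft : x.left = 1 := hfix _ (hl (map_inl_aut_left_of_map_eq_one ψ hx g))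
  have hright : x.right = 1 := hr <| by
    have h := congrArg ψ (inl_left_mul_inr_right x)
    rwa [hleft, map_one, one_mul, hx, ← map_one (ψ.comp inr)] at h
  exact SemidirectProduct.ext hleft hright

end SemidirectProduct

theorem sdprod_epi_torsionFree_injective_general (A : Subring ℚ)
    (φ : Multiplicative ℤ →* MulAut (Multiplicative A))
    (hnonab : ∃ u v : Multiplicative A ⋊[φ] Multiplicative ℤ, u * v ≠ v * u)
    (W : Type*) [Group W] (hW : ∀ g : W, g ≠ 1 → ¬IsOfFinOrder g)
    (ψ : Multiplicative A ⋊[φ] Multiplicative ℤ →* W)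
    (hA : ∃ a : Multiplicative A, ψ (SemidirectProduct.inl a) ≠ 1)
    (ht : ψ (SemidirectProduct.inr (Multiplicative.ofAdd 1)) ≠ 1) :
    Function.Injective ψ := by
  have hinl : Injective (ψ.comp inl) :=
    injective_of_exists_map_ne_one (ι := A.subtype.toAddMonoidHom) Subtype.val_injective hW _ hA
  have hinr : Injective (ψ.comp inr) :=
    injective_of_exists_map_ne_one (ι := Int.castAddHom ℚ) Int.cast_injective hW _ ⟨ofAdd 1, ht⟩
  have hφ : φ (ofAdd 1) ≠ 1 := fun h => by
    obtain ⟨u, v, huv⟩ := hnonab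
    exact huv (mul_comm_of_eq_one (MonoidHom.ext_mint h) u v)
  refine injective_of_injective_comp_inl_inr ψ hinl hinr (ofAdd 1) fun l hl => ?_
  by_contra hl1
  exact hφ (eq_one_of_apply_eq_self (ι := A.subtype.toAddMonoidHom) Subtype.val_injective _ hl1 hl)

/-- Let `T` be a nonabelian semidirect product of the (additive group of a)
finitely generated subring `A` of `ℚ` by an infinite cyclic group `⟨t⟩`.
Every epimorphism from `T` onto a torsion-free group which is nontrivial on `A`
and on `⟨t⟩` is an isomorphism. -/
theorem sdprod_epi_torsionFree_injective (A : Subring ℚ)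
    (hfg : ∃ s : Finset ℚ, Subring.closure (↑s : Set ℚ) = A)
    (φ : Multiplicative ℤ →* MulAut (Multiplicative A))
    (hnonab : ∃ u v : Multiplicative A ⋊[φ] Multiplicative ℤ, u * v ≠ v * u)
    (W : Type*) [Group W] (hW : ∀ g : W, g ≠ 1 → ¬IsOfFinOrder g)
    (ψ : Multiplicative A ⋊[φ] Multiplicative ℤ →* W)
    (hsurj : Function.Surjective ψ)
    (hA : ∃ a : Multiplicative A, ψ (SemidirectProduct.inl a) ≠ 1)
    (ht : ψ (SemidirectProduct.inr (Multiplicative.ofAdd 1)) ≠ 1) :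
    Function.Injective ψ :=
  sdprod_epi_torsionFree_injective_general A φ hnonab W hW ψ hA ht
end

section
/- Every nonabelian Baumslag-Solitar group B(m,n) with m ≠ n is not residually p for any prime p not dividing m − n: the image of x in the pro-p completion is trivial, since in any nilpotent quotient of p-power order the relation x^(n−m) = [xᵐ, y⁻¹] forces x into every term of the lower central series. -/
/-- The relation `y xᵐ y⁻¹ = xⁿ` of the Baumslag–Solitar group `B(m,n)`, with
`x` encoded by `false` and `y` by `true`. -/
def bsRels (m n : ℤ) : Set (FreeGroup Bool) :=
  {FreeGroup.of true * FreeGroup.of false ^ m * (FreeGroup.of true)⁻¹ *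
    (FreeGroup.of false ^ n)⁻¹}

/-- The Baumslag–Solitar group `B(m,n) = ⟨x, y | yxᵐy⁻¹ = xⁿ⟩`. -/
def BS (m n : ℤ) : Type := PresentedGroup (bsRels m n)

instance (m n : ℤ) : Group (BS m n) := by unfold BS; infer_instance

/-- A group `G` is residually `p` if every nontrivial element survives in some
finite `p`-group quotient. -/
def ResiduallyP (p : ℕ) (G : Type*) [Group G] : Prop :=
  ∀ g : G, g ≠ 1 → ∃ (P : Type) (_ : Group P) (_ : Fintype P) (f : G →* P),
    IsPGroup p P ∧ f g ≠ 1
/-!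
Let `a`, `b` be the images of `x`, `y` in a finite `p`-group `P`. The relation gives
`a ^ (n - m) = ⁅a ^ m, b⁆⁻¹`, so if `a` lies in the `k`-th term `γₖ` of the lower central series
then `a ^ (n - m) ∈ γₖ₊₁`; since `P ⧸ γₖ₊₁` is a `p`-group and `p ∤ n - m`, already `a ∈ γₖ₊₁`.
As `P` is nilpotent, `a = 1`. But `x ≠ 1` in `B(m,n)`: it acts as `t ↦ t + 1` in the affine
action on `ℚ` in which `y` acts as `t ↦ (n / m) * t`.
-/

section PGroup

variable {p : ℕ} [Fact p.Prime] {G : Type*} [Group G]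

theorem IsPGroup.eq_one_of_zpow_eq_one (hG : IsPGroup p G) {k : ℤ} (hk : ¬ (p : ℤ) ∣ k) {g : G}
    (hg : g ^ k = 1) : g = 1 := by
  have hk' : ¬ p ∣ k.natAbs := by rwa [← Int.natCast_dvd]
  exact (hG.powEquiv' hk').injective (by simpa [pow_natAbs_eq_one] using hg)

theorem IsPGroup.mem_of_zpow_mem (hG : IsPGroup p G) {k : ℤ} (hk : ¬ (p : ℤ) ∣ k)
    (N : Subgroup G) [N.Normal] {g : G} (hg : g ^ k ∈ N) : g ∈ N := by
  rw [← QuotientGroup.eq_one_iff] at hg ⊢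
  exact (hG.to_quotient N).eq_one_of_zpow_eq_one hk hg

end PGroup

open scoped commutatorElement in
theorem zpow_sub_mem_lowerCentralSeries_succ {G : Type*} [Group G] {a b : G} {m n : ℤ}
    (h : b * a ^ m * b⁻¹ = a ^ n) {k : ℕ} (ha : a ∈ (⊤ : Subgroup G).lowerCentralSeries k) :
    a ^ (n - m) ∈ (⊤ : Subgroup G).lowerCentralSeries (k + 1) := by
  have hcomm : a ^ (n - m) = ⁅a ^ m, b⁆⁻¹ := by
    rw [commutatorElement_def, zpow_sub, ← h]
    group
  rw [hcomm]
  exact inv_mem (Subgroup.commutator_mem_commutator (zpow_mem ha m) (Subgroup.mem_top b))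

theorem IsPGroup.eq_one_of_mul_zpow_mul_inv_eq_zpow {p : ℕ} [Fact p.Prime] {G : Type*} [Group G]
    [Finite G] (hG : IsPGroup p G) {m n : ℤ} (hmn : ¬ (p : ℤ) ∣ m - n) {a b : G}
    (h : b * a ^ m * b⁻¹ = a ^ n) : a = 1 := by
  have hnm : ¬ (p : ℤ) ∣ n - m := by rwa [dvd_sub_comm]
  have ha : ∀ k, a ∈ (⊤ : Subgroup G).lowerCentralSeries k := by
    intro k
    induction k with
    | zero => exact Subgroup.mem_top a
    | succ k ih => exact hG.mem_of_zpow_mem hnm _ (zpow_sub_mem_lowerCentralSeries_succ h ih)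
  obtain ⟨c, hc⟩ := Subgroup.nilpotent_iff_lowerCentralSeries.mp hG.isNilpotent
  simpa [hc] using ha c

namespace BS

variable {m n : ℤ}

def x : BS m n := PresentedGroup.of false

def y : BS m n := PresentedGroup.of true

theorem y_mul_x_zpow_mul_y_inv : (y * x ^ m * y⁻¹ : BS m n) = x ^ n := by
  rw [← mul_inv_eq_one]
  exact PresentedGroup.one_of_mem (rels := bsRels m n) rfl

theorem x_ne_one (hm : m ≠ 0) (hn : n ≠ 0) : (x : BS m n) ≠ 1 := by
  let Y : Equiv.Perm ℚ := Equiv.mulLeft₀ ((n : ℚ) / m) (by simp [hm, hn])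
  let X : Equiv.Perm ℚ := Equiv.addRight 1
  have hrel : ∀ r ∈ bsRels m n, FreeGroup.lift (fun b => if b then Y else X) r = 1 := by
    rintro _ rfl
    ext t
    simp only [map_mul, map_inv, map_zpow, FreeGroup.lift_apply_of, Bool.false_eq_true,
      if_true, if_false, Equiv.zsmul_addRight, Equiv.Perm.inv_def, Equiv.Perm.coe_mul,
      Function.comp_apply, Equiv.coe_addRight, Equiv.addRight_symm, Equiv.mulLeft₀_apply,
      Equiv.mulLeft₀_symm_apply, Equiv.Perm.coe_one, id_eq, zsmul_eq_mul, mul_one, inv_div, X, Y]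
    field_simp
    ring
  let φ : BS m n →* Equiv.Perm ℚ := PresentedGroup.toGroup hrel
  have hφx : φ x = X := PresentedGroup.toGroup.of hrel
  intro h
  rw [h, map_one] at hφx
  simpa [X] using congrArg (· 0) hφx

end BS

theorem bs_not_residuallyP_general (m n : ℤ) (hmn : m * n ≠ 0)
    (p : ℕ) (hp : p.Prime) (hdvd : ¬ ((p : ℤ) ∣ m - n)) :
    ¬ ResiduallyP p (BS m n) := by
  have : Fact p.Prime := ⟨hp⟩
  obtain ⟨hm, hn⟩ := mul_ne_zero_iff.mp hmn
  intro hres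
  obtain ⟨P, _, _, f, hP, hfx⟩ := hres BS.x (BS.x_ne_one hm hn)
  refine hfx (hP.eq_one_of_mul_zpow_mul_inv_eq_zpow hdvd (b := f BS.y) ?_)
  simpa using congrArg f BS.y_mul_x_zpow_mul_y_inv

/-- A nonabelian Baumslag–Solitar group `B(m,n)` with `m ≠ n` is not
residually `p` for any prime `p` not dividing `m - n`. -/
theorem bs_not_residuallyP (m n : ℤ) (hmn : m * n ≠ 0) (hne : m ≠ n)
    (p : ℕ) (hp : p.Prime) (hdvd : ¬ ((p : ℤ) ∣ m - n)) :
    ¬ ResiduallyP p (BS m n) :=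
  bs_not_residuallyP_general m n hmn p hp hdvd
end

section
/- The group G = ⟨x, y | [[x,y],y] = 1⟩ is not a CSA group: writing yᵢ = x⁻ⁱyxⁱ, the elements y₀ and y₁ commute, and the maximal abelian subgroup containing y₁ intersects its conjugate by x nontrivially although x does not normalize it. -/
open scoped commutatorElement

/-- The relation `[[x,y],y] = 1`, with `x` encoded by `false` and `y` by `true`. -/
def oneRel : Set (FreeGroup Bool) :=
  {⁅⁅FreeGroup.of false, FreeGroup.of true⁆, FreeGroup.of true⁆}

/-- The one-relator group `G = ⟨x, y | [[x,y],y] = 1⟩`. -/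
def OneRelGroup : Type := PresentedGroup oneRel

instance : Group OneRelGroup := by unfold OneRelGroup; infer_instance

/-- The generator `x`. -/
def gx : OneRelGroup := PresentedGroup.of false

/-- The generator `y`. -/
def gy : OneRelGroup := PresentedGroup.of true

/-- `yᵢ = x⁻ⁱ y xⁱ`. -/
def gyi (i : ℤ) : OneRelGroup := gx ^ (-i) * gy * gx ^ i

/-!
If `[[a,b],b] = 1` then `b` commutes with its conjugate `a⁻¹ b a`, so in a CSA group the
maximal abelian subgroup containing both meets its conjugate by `a` in `b ≠ 1`; malnormality
then forces `a` into that subgroup, so `a` commutes with `b`. In `G` the generators `x` and `y`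
do not commute, as the map to the dihedral group of order 8 (`x ↦ r`, `y ↦ s`, where
`[r, s] = r²` is central) shows.
-/

section General

variable {G : Type*} [Group G]

theorem commute_conj_of_commutatorElement_commutatorElement_eq_one {a b : G}
    (h : ⁅⁅a, b⁆, b⁆ = 1) : Commute b (a⁻¹ * b * a) := by
  have key :
      b * (a⁻¹ * b * a) * ((a⁻¹ * b * a) * b)⁻¹ = a⁻¹ * ⁅⁅a, b⁆, b⁆ * a := by
    simp only [commutatorElement_def]
    group
  rw [Commute, SemiconjBy, ← mul_inv_eq_one, key, h, mul_one, inv_mul_cancel]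

theorem exists_maximalAbelian_le (A : Subgroup G) [IsMulCommutative A] :
    ∃ M : Subgroup G, A ≤ M ∧ MaximalAbelian M := by
  obtain ⟨M, hAM, hM, hMmax⟩ := zorn_le_nonempty₀ {N : Subgroup G | IsMulCommutative N}
    (fun c hc hchain N hN => by
      have : Nonempty c := ⟨⟨N, hN⟩⟩
      have : ∀ K : c, IsMulCommutative (K : Subgroup G) := fun K => hc K.2
      refine ⟨⨆ K : c, (K : Subgroup G), Subgroup.isMulCommutative_iSup hchain.directed,
        fun K hK => le_iSup (fun K : c => (K : Subgroup G)) ⟨K, hK⟩⟩)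
    A ‹_›
  exact ⟨M, hAM, hM, fun N hN hMN => le_antisymm (hMmax hN hMN) hMN⟩

theorem IsCSA.commute_of_commute_conj (hG : IsCSA G) {a b : G} (hb : b ≠ 1)
    (h : Commute b (a⁻¹ * b * a)) : Commute a b := by
  have : IsMulCommutative (Subgroup.closure {b, a⁻¹ * b * a}) := by
    refine Subgroup.isMulCommutative_closure ?_
    rintro u (rfl | rfl) v (rfl | rfl)
    exacts [rfl, h, h.symm, rfl]
  obtain ⟨M, hAM, hM⟩ := exists_maximalAbelian_le (Subgroup.closure {b, a⁻¹ * b * a})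
  have hbM : b ∈ M := hAM (Subgroup.subset_closure (by simp))
  have hb'M : a⁻¹ * b * a ∈ M := hAM (Subgroup.subset_closure (by simp))
  by_contra hab
  have := hM.1
  have haM : a ∉ M := fun haM => hab (setLike_mul_comm haM hbM)
  exact hb (hG M hM a haM b hbM hb'M)

end General

theorem commutatorElement_commutatorElement_gx_gy : ⁅⁅gx, gy⁆, gy⁆ = 1 := by
  have := PresentedGroup.one_of_mem (rels := oneRel) (Set.mem_singleton _)
  rwa [map_commutatorElement, map_commutatorElement] at this

def OneRelGroup.toDihedralGroup : OneRelGroup →* DihedralGroup 4 :=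
  PresentedGroup.toGroup (f := fun b => if b then .sr 0 else .r 1) (by
    rintro _ rfl
    simp only [map_commutatorElement, FreeGroup.lift_apply_of]
    decide)

def OneRelGroup.xExponentSum : OneRelGroup →* Multiplicative ℤ :=
  PresentedGroup.toGroup (f := fun b => if b then 1 else .ofAdd 1) (by
    rintro _ rfl
    simp only [map_commutatorElement, commutatorElement_eq_one_iff_commute]
    exact Commute.all _ _)

@[simp]
theorem OneRelGroup.toDihedralGroup_gx : OneRelGroup.toDihedralGroup gx = .r 1 :=
  PresentedGroup.toGroup.of _

@[simp]
theorem OneRelGroup.toDihedralGroup_gy : OneRelGroup.toDihedralGroup gy = .sr 0 :=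
  PresentedGroup.toGroup.of _

@[simp]
theorem OneRelGroup.xExponentSum_gx : OneRelGroup.xExponentSum gx = .ofAdd 1 :=
  PresentedGroup.toGroup.of _

@[simp]
theorem OneRelGroup.xExponentSum_gy : OneRelGroup.xExponentSum gy = 1 :=
  PresentedGroup.toGroup.of _

theorem gy_ne_one : gy ≠ 1 := fun h => by
  have := congrArg OneRelGroup.toDihedralGroup h
  rw [OneRelGroup.toDihedralGroup_gy, map_one] at this
  exact absurd this (by decide)

theorem not_commute_gx_gy : ¬ Commute gx gy := fun h => by
  have := (h.map OneRelGroup.toDihedralGroup).eq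
  simp only [OneRelGroup.toDihedralGroup_gx, OneRelGroup.toDihedralGroup_gy] at this
  exact absurd this (by decide)

theorem gyi_zero : gyi 0 = gy := by simp [gyi]

theorem gyi_one : gyi 1 = gx⁻¹ * gy * gx := by simp [gyi]

theorem closure_gy_conj_le_ker_xExponentSum :
    Subgroup.closure {gy, gx⁻¹ * gy * gx} ≤ OneRelGroup.xExponentSum.ker := by
  rw [Subgroup.closure_le]
  rintro z (rfl | rfl) <;> simp

theorem gx_notMem_closure_gy_conj : gx ∉ Subgroup.closure {gy, gx⁻¹ * gy * gx} := fun h => by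
  have := closure_gy_conj_le_ker_xExponentSum h
  rw [MonoidHom.mem_ker, OneRelGroup.xExponentSum_gx] at this
  exact absurd this (by decide)

/-- The group `G = ⟨x, y | [[x,y],y] = 1⟩` is not CSA: the elements
`y₀ = y` and `y₁ = x⁻¹yx` commute, `y₁` is a nontrivial element of
`H = ⟨y₀, y₁⟩` lying also in the conjugate `x⁻¹Hx`, while `x ∉ H`. -/
theorem oneRelGroup_not_isCSA :
    Commute (gyi 0) (gyi 1) ∧
    gyi 1 ≠ 1 ∧
    gx ∉ Subgroup.closure {gyi 0, gyi 1} ∧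
    gyi 1 ∈ Subgroup.closure {gyi 0, gyi 1} ⊓
      (Subgroup.closure {gyi 0, gyi 1}).map (MulAut.conj gx⁻¹).toMonoidHom ∧
    ¬ IsCSA OneRelGroup := by
  have hcomm : Commute gy (gx⁻¹ * gy * gx) :=
    commute_conj_of_commutatorElement_commutatorElement_eq_one
      commutatorElement_commutatorElement_gx_gy
  rw [gyi_zero, gyi_one]
  refine ⟨hcomm, ?_, gx_notMem_closure_gy_conj, ⟨?_, gy, ?_, ?_⟩,
    fun hG => not_commute_gx_gy (hG.commute_of_commute_conj gy_ne_one hcomm)⟩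
  · rw [Ne, mul_assoc, inv_mul_eq_one, eq_comm, mul_eq_right]
    exact gy_ne_one
  · exact Subgroup.subset_closure (by simp)
  · exact Subgroup.subset_closure (by simp)
  · simp
end

section
/- Let A be a malnormal subgroup of a group G, B a subgroup of a group H, φ: A → B an isomorphism, and P = G *_φ H the amalgamated free product. Then H is a malnormal subgroup of P; consequently every malnormal subgroup of H is malnormal in P. -/
variable {G H : Type} [Group G] [Group H]

/-- The relations identifying `a ∈ A ≤ G` with `φ(a) ∈ H` in the free product. -/
def amalRels (A : Subgroup G) (φ : A →* H) : Set (Monoid.Coprod G H) :=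
  {w | ∃ a : A, w = Monoid.Coprod.inl (a : G) * (Monoid.Coprod.inr (φ a))⁻¹}

/-- The amalgamated free product `P = G *_φ H`. -/
def AmalProd (A : Subgroup G) (φ : A →* H) : Type :=
  Monoid.Coprod G H ⧸ Subgroup.normalClosure (amalRels A φ)

instance (A : Subgroup G) (φ : A →* H) : Group (AmalProd A φ) := by
  unfold AmalProd; infer_instance

/-- The canonical map `H →* G *_φ H`. -/
def amalInr (A : Subgroup G) (φ : A →* H) : H →* AmalProd A φ :=
  (QuotientGroup.mk' (Subgroup.normalClosure (amalRels A φ))).comp Monoid.Coprod.inr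

/-!
View `G *_φ H` as the pushout of `G ← A → H`, identifying `A` with its images. Write `x ∉ H` as
`x = h * v` with `h ∈ H` and `v` a nonempty reduced word whose first letter `g` lies in `G ∖ A`,
and let `1 ≠ b ∈ H`. If `b' = h⁻¹ b h ∉ A`, then `v⁻¹ b' v` is a reduced word of length at least
three. If `b' ∈ A`, it merges with `g`, and `g⁻¹ b' g ∉ A` by malnormality of `A`, so `x⁻¹ b x`
is spelled by a reduced word of length at least three or by a single letter of `G ∖ A`. By
uniqueness of normal forms neither lies in `H`.
-/

open Function Monoid CoprodI PushoutI

theorem Malnormal.comap {P Q : Type*} [Group P] [Group Q] {S : Subgroup Q} (hS : Malnormal S)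
    {f : P →* Q} (hf : Injective f) : Malnormal (S.comap f) := by
  intro x hx g hg hconj
  apply hf
  rw [map_one]
  exact hS (f x) hx (f g) hg (by simpa using hconj)

theorem Malnormal.map {P Q : Type*} [Group P] [Group Q] {K : Subgroup P} (hK : Malnormal K)
    {f : P →* Q} (hf : Injective f) (hrange : Malnormal f.range) : Malnormal (K.map f) := by
  rintro x hx _ ⟨k, hk, rfl⟩ ⟨k', hk', hconj⟩
  by_cases hxf : x ∈ f.range
  · obtain ⟨y, rfl⟩ := hxf
    have hy : y ∉ K := fun hy => hx ⟨y, hy, rfl⟩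
    have hyk : y⁻¹ * k * y = k' := hf (by simpa using hconj.symm)
    rw [hK y hy k hk (hyk ▸ hk'), map_one]
  · exact hrange x hxf (f k) ⟨k, rfl⟩ ⟨k', hconj⟩

namespace Monoid.CoprodI.NeWord

variable {ι : Type*} {Γ : ι → Type*} [∀ i, Group (Γ i)]

theorem toList_inv {i j : ι} (w : NeWord Γ i j) :
    w.inv.toList = (w.toList.map fun l => ⟨l.1, l.2⁻¹⟩).reverse := by
  induction w with
  | singleton => rfl
  | append w₁ _ w₂ ih₁ ih₂ => simp [inv, ih₁, ih₂]

end Monoid.CoprodI.NeWord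

namespace Monoid.PushoutI

variable {ι : Type*} {Γ : ι → Type*} [∀ i, Group (Γ i)] {C : Type*} [Group C]
  {φ : ∀ i, C →* Γ i}

theorem reduced_neWord_inv {i j : ι} {w : NeWord Γ i j} (hw : Reduced φ w.toWord) :
    Reduced φ w.inv.toWord := by
  intro g hg
  obtain ⟨l, hl, rfl⟩ : ∃ l ∈ w.toList, (⟨l.1, l.2⁻¹⟩ : Σ i, Γ i) = g := by
    simpa [NeWord.toWord, NeWord.toList_inv] using hg
  exact fun hmem => hw l hl (by simpa using inv_mem hmem)

theorem Reduced.map_fst_eq_of_prod_eq (hφ : ∀ i, Injective (φ i)) {u v : Word Γ}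
    (hu : Reduced φ u) (hv : Reduced φ v)
    (h : (ofCoprodI u.prod : PushoutI φ) = ofCoprodI v.prod) :
    u.toList.map Sigma.fst = v.toList.map Sigma.fst := by
  obtain ⟨d⟩ := NormalWord.transversal_nonempty φ hφ
  obtain ⟨u', hu'prod, hu'map⟩ := hu.exists_normalWord_prod_eq d
  obtain ⟨v', hv'prod, hv'map⟩ := hv.exists_normalWord_prod_eq d
  have : u' = v' := NormalWord.prod_injective (by rw [hu'prod, hv'prod, h])
  rw [← hu'map, ← hv'map, this]

theorem reduced_neWord_singleton {i : ι} {c : Γ i} (hc : c ∉ (φ i).range) :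
    Reduced φ (NeWord.singleton c fun h => hc (h ▸ one_mem _)).toWord := by
  simpa [Reduced, NeWord.toWord] using hc

theorem Reduced.map_fst_sublist_of_mem_range (hφ : ∀ i, Injective (φ i)) {w : Word Γ}
    (hw : Reduced φ w) {j : ι} (h : (ofCoprodI w.prod : PushoutI φ) ∈ (of j).range) :
    (w.toList.map Sigma.fst).Sublist [j] := by
  obtain ⟨c, hc⟩ := h
  by_cases hcφ : c ∈ (φ j).range
  · obtain ⟨a, rfl⟩ := hcφ
    rw [hw.eq_empty_of_mem_range hφ ⟨a, by rw [← hc, of_apply_eq_base]⟩]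
    simp [Word.empty]
  · have := hw.map_fst_eq_of_prod_eq hφ (reduced_neWord_singleton hcφ)
      (by rw [← NeWord.prod, NeWord.prod_singleton, ofCoprodI_of, hc])
    simp [this, NeWord.toWord]

theorem reduced_neWord_append_iff {i j k l : ι} {w₁ : NeWord Γ i j} {hjk : j ≠ k}
    {w₂ : NeWord Γ k l} :
    Reduced φ (w₁.append hjk w₂).toWord ↔ Reduced φ w₁.toWord ∧ Reduced φ w₂.toWord := by
  simp only [Reduced, NeWord.toWord, NeWord.toList, List.forall_mem_append]

theorem conj_notMem_range (hφ : ∀ i, Injective (φ i)) {i j : ι} {c : Γ i}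
    (hc : c ∉ (φ i).range) {v : Word Γ} (hv : Reduced φ v) (hvi : v.fstIdx ≠ some i)
    (hvj : v ≠ .empty ∨ i ≠ j) :
    (ofCoprodI v.prod : PushoutI φ)⁻¹ * of i c * ofCoprodI v.prod ∉ (of j).range := by
  intro hmem
  have hc1 : c ≠ 1 := fun h => hc (h ▸ one_mem _)
  rcases eq_or_ne v .empty with rfl | hne
  · have hij := hvj.resolve_left (not_not.mpr rfl)
    have := (reduced_neWord_singleton hc).map_fst_sublist_of_mem_range hφ
      (by rw [← NeWord.prod, NeWord.prod_singleton, ofCoprodI_of]; simpa using hmem)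
    simp [NeWord.toWord] at this
    exact hij this
  · obtain ⟨k, l, v, rfl⟩ := NeWord.of_word v hne
    have hki : k ≠ i := by simpa [Word.fstIdx, NeWord.toWord] using hvi
    -- `v⁻¹ c v` is spelled by the reduced word `v⁻¹ · c · v`, which has at least three letters.
    let W := (v.inv.append hki (.singleton c hc1)).append hki.symm v
    have hW : Reduced φ W.toWord := by
      simp only [W, reduced_neWord_append_iff]
      exact ⟨⟨reduced_neWord_inv hv, reduced_neWord_singleton hc⟩, hv⟩
    have hprod : W.prod = v.prod⁻¹ * CoprodI.of c * v.prod := by simp [W]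
    have hlen := (hW.map_fst_sublist_of_mem_range hφ
      (by rw [← NeWord.prod, hprod]; simpa [NeWord.prod] using hmem)).length_le
    simp [W, NeWord.toWord, NeWord.toList_inv] at hlen
    have := List.length_pos_iff.mpr v.toList_ne_nil
    omega

theorem NormalWord.reduced {d : NormalWord.Transversal φ} (w : NormalWord d) :
    Reduced φ w.toWord := by
  rintro ⟨i, g⟩ hg hgφ
  apply w.ne_one _ hg
  have h1 := (d.compl i).equiv_snd_eq_self_of_mem_of_one_mem (one_mem _) (w.normalized i g hg)
  have h2 := (d.compl i).equiv_snd_eq_one_of_mem_of_one_mem (d.one_mem i) hgφ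
  exact congrArg Subtype.val (h1.symm.trans h2)

theorem exists_eq_of_mul_ofCoprodI (hφ : ∀ i, Injective (φ i)) (x : PushoutI φ) (j : ι) :
    ∃ (h : Γ j) (w : Word Γ), Reduced φ w ∧ w.fstIdx ≠ some j ∧
      x = of j h * ofCoprodI w.prod := by
  classical
  obtain ⟨d⟩ := NormalWord.transversal_nonempty φ hφ
  set n : NormalWord d := x • NormalWord.empty
  have hx : x = base φ n.head * ofCoprodI n.toWord.prod := by
    have := NormalWord.prod_smul x (NormalWord.empty (d := d))
    rw [NormalWord.prod_empty, mul_one] at this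
    exact this.symm
  set p := Word.equivPair j n.toWord
  refine ⟨φ j n.head * p.head, p.tail,
    fun g hg => n.reduced g (Word.mem_of_mem_equivPair_tail _ hg), p.fstIdx_ne, ?_⟩
  rw [hx, ← (Word.equivPair j).symm_apply_apply n.toWord, Word.equivPair_symm, Word.prod_rcons]
  simp [p, mul_assoc, of_apply_eq_base]

theorem malnormal_range_of (hφ : ∀ i, Injective (φ i)) (j : ι)
    (hmal : ∀ i, i ≠ j → Malnormal (φ i).range) : Malnormal (of (φ := φ) j).range := by
  rintro x hx _ ⟨b, rfl⟩ hconj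
  obtain ⟨h, w, hw, hwj, rfl⟩ := exists_eq_of_mul_ofCoprodI hφ x j
  by_contra hb
  have hb' : h⁻¹ * b * h ≠ 1 := by
    rw [mul_assoc, Ne, inv_mul_eq_one, right_eq_mul]
    exact fun hb1 => hb (by rw [hb1, map_one])
  have hconj' : (ofCoprodI w.prod : PushoutI φ)⁻¹ * of j (h⁻¹ * b * h) * ofCoprodI w.prod ∈
      (of j).range := by
    simpa [mul_assoc] using hconj
  by_cases hbφ : h⁻¹ * b * h ∈ (φ j).range
  · obtain ⟨a, ha⟩ := hbφ
    cases w using Word.consRecOn with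
    | empty => exact hx ⟨h, by simp⟩
    | cons i g w hwi _ _ =>
      have hij : i ≠ j := by simpa using hwj
      have hg : g ∉ (φ i).range := hw _ List.mem_cons_self
      have hc : g⁻¹ * φ i a * g ∉ (φ i).range := by
        intro hmem
        have ha1 : a = 1 := hφ i (by simpa using hmal i hij g hg (φ i a) ⟨a, rfl⟩ hmem)
        exact hb' (by rw [← ha, ha1, map_one])
      -- `h⁻¹ b h = φ j a = φ i a` in the pushout, so it merges into the first letter `g`.
      apply conj_notMem_range hφ hc (fun l hl => hw l (List.mem_cons_of_mem _ hl)) hwi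
        (Or.inr hij)
      rw [Word.prod_cons, ← ha, of_apply_eq_base, ← of_apply_eq_base φ i] at hconj'
      simpa [mul_assoc] using hconj'
  · refine conj_notMem_range hφ hbφ hw hwj (Or.inl ?_) hconj'
    rintro rfl
    exact hx ⟨h, by simp⟩

end Monoid.PushoutI

/-- Indexing the two factors by `Bool` presents `AmalProd A φ` as a `PushoutI`. -/
@[reducible] def amalFactor (G H : Type) : Bool → Type
  | true => G
  | false => H

instance : ∀ b, Group (amalFactor G H b)
  | true => ‹Group G›
  | false => ‹Group H›

@[reducible] def amalMap (A : Subgroup G) (φ : A →* H) : ∀ b, A →* amalFactor G H b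
  | true => A.subtype
  | false => φ

theorem amalMap_injective (A : Subgroup G) {φ : A →* H} (hφ : Injective φ) :
    ∀ b, Injective (amalMap A φ b)
  | true => A.subtype_injective
  | false => hφ

namespace AmalProd

variable (A : Subgroup G) (φ : A →* H)

def toPushoutI : AmalProd A φ →* PushoutI (amalMap A φ) :=
  QuotientGroup.lift _ (Coprod.lift (of (φ := amalMap A φ) true) (of (φ := amalMap A φ) false)) <|
    Subgroup.normalClosure_le_normal <| by
      rintro _ ⟨a, rfl⟩
      rw [SetLike.mem_coe, MonoidHom.mem_ker, map_mul, map_inv, Coprod.lift_apply_inl,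
        Coprod.lift_apply_inr, mul_inv_eq_one]
      exact (of_apply_eq_base _ true a).trans (of_apply_eq_base (amalMap A φ) false a).symm

def ofPushoutI : PushoutI (amalMap A φ) →* AmalProd A φ :=
  PushoutI.lift
    (fun | true => (QuotientGroup.mk' _).comp Coprod.inl | false => amalInr A φ)
    ((amalInr A φ).comp φ) <| by
      rintro (_ | _)
      · rfl
      · ext a
        refine (QuotientGroup.eq_iff_div_mem).mpr (Subgroup.subset_normalClosure ⟨a, ?_⟩)
        simp [div_eq_mul_inv]

theorem toPushoutI_mk_inl (g : G) :
    toPushoutI A φ (QuotientGroup.mk (Coprod.inl g)) = of (φ := amalMap A φ) true g :=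
  Coprod.lift_apply_inl (of (φ := amalMap A φ) true) (of false) g

theorem toPushoutI_amalInr (h : H) :
    toPushoutI A φ (amalInr A φ h) = of (φ := amalMap A φ) false h :=
  Coprod.lift_apply_inr (of (φ := amalMap A φ) true) (of false) h

theorem ofPushoutI_of_true (g : G) :
    ofPushoutI A φ (of true g) = QuotientGroup.mk (Coprod.inl g) :=
  PushoutI.lift_of _ _ _ _

theorem ofPushoutI_of_false (h : H) : ofPushoutI A φ (of false h) = amalInr A φ h :=
  PushoutI.lift_of _ _ _ _

def equivPushoutI : AmalProd A φ ≃* PushoutI (amalMap A φ) :=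
  MonoidHom.toMulEquiv (toPushoutI A φ) (ofPushoutI A φ)
    (QuotientGroup.monoidHom_ext _ <| Coprod.hom_ext
      (MonoidHom.ext fun g => by
        show ofPushoutI A φ (toPushoutI A φ (QuotientGroup.mk (Coprod.inl g))) = _
        rw [toPushoutI_mk_inl, ofPushoutI_of_true]; rfl)
      (MonoidHom.ext fun h => by
        show ofPushoutI A φ (toPushoutI A φ (amalInr A φ h)) = _
        rw [toPushoutI_amalInr, ofPushoutI_of_false]; rfl))
    (PushoutI.hom_ext_nonempty fun
      | true => MonoidHom.ext fun g => by
        show toPushoutI A φ (ofPushoutI A φ (of true g)) = _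
        rw [ofPushoutI_of_true, toPushoutI_mk_inl]; rfl
      | false => MonoidHom.ext fun h => by
        show toPushoutI A φ (ofPushoutI A φ (of false h)) = _
        rw [ofPushoutI_of_false, toPushoutI_amalInr]; rfl)

theorem equivPushoutI_comp_amalInr :
    (equivPushoutI A φ : AmalProd A φ →* PushoutI (amalMap A φ)).comp (amalInr A φ) =
      of (φ := amalMap A φ) false :=
  MonoidHom.ext (toPushoutI_amalInr A φ)

theorem range_amalInr :
    (amalInr A φ).range =
      (of (φ := amalMap A φ) false).range.comap (equivPushoutI A φ : AmalProd A φ →* _) := by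
  rw [← equivPushoutI_comp_amalInr, ← MonoidHom.map_range]
  exact (Subgroup.comap_map_eq_self_of_injective (equivPushoutI A φ).injective _).symm

end AmalProd

/-- If `A` is a malnormal subgroup of `G` and `φ : A → B ≤ H` is an isomorphism
onto a subgroup of `H`, then `H` is malnormal in the amalgamated product
`P = G *_φ H`; consequently every malnormal subgroup of `H` is malnormal in `P`. -/
theorem malnormal_in_amalgamated_product (A : Subgroup G) (hA : Malnormal A)
    (φ : A →* H) (hφ : Function.Injective φ) :
    Malnormal (amalInr A φ).range ∧
    ∀ K : Subgroup H, Malnormal K → Malnormal (K.map (amalInr A φ)) := by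
  have hmal : ∀ b, b ≠ false → Malnormal (amalMap A φ b).range := by
    rintro (_ | _) hb
    · exact absurd rfl hb
    · simpa [amalMap] using hA
  have hH : Malnormal (amalInr A φ).range := by
    rw [AmalProd.range_amalInr]
    exact (PushoutI.malnormal_range_of (amalMap_injective A hφ) false hmal).comap
      (AmalProd.equivPushoutI A φ).injective
  have hinj : Injective (amalInr A φ) := by
    refine Injective.of_comp (f := AmalProd.equivPushoutI A φ) ?_
    exact PushoutI.of_injective (amalMap_injective A hφ) false
  exact ⟨hH, fun K hK => hK.map hinj hH⟩
end
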